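/- Let r > 0, let φ, ψ, y ∈ ℝ, and let κ ∈ ℝ with κ² < 1/3. Then the two equations e^{iφ} r = e^{iψ} a_d(y;κ) and e^{iφ} √(r² + r⁴/2) = e^{iψ} b_d(y;κ) hold simultaneously if and only if κ = 0, r = 1/2, y = √2·artanh(1/2), and ψ − φ + π/2 ∈ 2πℤ. Consequently, the intersection of the set {(e^{iφ} r, e^{iφ}√(r² + r⁴/2)) : r > 0, φ ∈ ℝ} with the set {(e^{iψ} a_d(y;κ), e^{iψ} b_d(y;κ)) : y ∈ ℝ, κ² < 1/3, ψ ∈ ℝ} equals the circle {(e^{iφ}/2, e^{iφ}·3/(4√2)) : φ ∈ ℝ}. -/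

import Mathlib

open Filter Set

/-- The inverse hyperbolic tangent. -/
noncomputable def rArtanh (x : ℝ) : ℝ := Real.log ((1 + x) / (1 - x)) / 2

/-- The defect solution a_d(y;κ) of the σ = −1 Ginzburg–Landau system. -/
noncomputable def defectA (κ : ℝ) (y : ℝ) : ℂ :=
  ((Real.sqrt 2 * κ : ℝ) +
      Complex.I * (Real.sqrt (1 - 3 * κ ^ 2) : ℂ) *
        (Real.tanh (Real.sqrt (1 - 3 * κ ^ 2) * y / Real.sqrt 2) : ℂ)) *
    Complex.exp (Complex.I * κ * y)

/-- b_d(y;κ) = ∂_y a_d(y;κ). -/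
noncomputable def defectB (κ : ℝ) : ℝ → ℂ := deriv (defectA κ)

/-!
Points of the unstable manifold of the origin have `a` and `b` in phase, so `Im (conj a * b)`
vanishes there, whereas along the defect solution it equals `κ (1 - κ²)`; hence `κ = 0`.
Then `a_d = i tanh (y/√2)` and `b_d = i (1 - tanh² (y/√2)) / √2` with the second factor
positive, so matching moduli and phases forces `e^{iφ} = i e^{iψ}`, `r = tanh (y/√2)` and
`√(r² + r⁴/2) = (1 - r²)/√2`, which squares to `4 r² = 1`.
-/

open Complex ComplexConjugate

theorem Real.hasDerivAt_tanh (x : ℝ) : HasDerivAt Real.tanh (1 - Real.tanh x ^ 2) x := by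
  have h := (Real.hasDerivAt_sinh x).div (Real.hasDerivAt_cosh x) (Real.cosh_pos x).ne'
  rw [show Real.sinh / Real.cosh = Real.tanh from
    funext fun t => (Real.tanh_eq_sinh_div_cosh t).symm] at h
  refine h.congr_deriv ?_
  have := (Real.cosh_pos x).ne'
  rw [Real.tanh_eq_sinh_div_cosh]
  field_simp

theorem rArtanh_eq_artanh {x : ℝ} (hx : x ∈ Icc (-1) 1) : rArtanh x = Real.artanh x := by
  rw [rArtanh, Real.artanh_eq_half_log hx]
  ring

theorem Real.tanh_eq_iff_eq_artanh {x t : ℝ} (hx : x ∈ Ioo (-1) 1) :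
    Real.tanh t = x ↔ t = Real.artanh x := by
  constructor
  · rintro rfl
    exact (Real.artanh_tanh t).symm
  · rintro rfl
    exact Real.tanh_artanh hx

theorem tanh_div_sqrt_two_eq_half_iff (y : ℝ) :
    Real.tanh (y / √2) = 1 / 2 ↔ y = √2 * rArtanh (1 / 2) := by
  rw [Real.tanh_eq_iff_eq_artanh (by norm_num), rArtanh_eq_artanh (by norm_num),
    div_eq_iff (by positivity), mul_comm]

theorem hasDerivAt_defectA (κ y : ℝ) :
    HasDerivAt (defectA κ)
      ((I * ((√(1 - 3 * κ ^ 2) ^ 2 * (1 - Real.tanh (√(1 - 3 * κ ^ 2) * y / √2) ^ 2) / √2 : ℝ) : ℂ)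
        + I * κ * (((√2 * κ : ℝ) : ℂ) +
          I * (√(1 - 3 * κ ^ 2) : ℂ) * (Real.tanh (√(1 - 3 * κ ^ 2) * y / √2) : ℂ)))
        * exp (I * κ * y)) y := by
  set α := √(1 - 3 * κ ^ 2)
  have hlin : HasDerivAt (fun z : ℝ => α * z / √2) (α / √2) y := by
    simpa using ((hasDerivAt_id y).const_mul α).div_const √2
  have hT := (Real.hasDerivAt_tanh (α * y / √2)).comp y hlin
  have hP := ((hT.ofReal_comp).const_mul (I * (α : ℂ))).const_add ((√2 * κ : ℝ) : ℂ)
  have hE : HasDerivAt (fun z : ℝ => exp (I * κ * z)) (exp (I * κ * y) * (I * κ)) y := by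
    simpa using ((hasDerivAt_id y).ofReal_comp.const_mul (I * (κ : ℂ))).cexp
  exact (hP.mul hE).congr_deriv (by push_cast [Function.comp_apply]; ring)

theorem defectB_eq (κ y : ℝ) :
    defectB κ y =
      (I * ((√(1 - 3 * κ ^ 2) ^ 2 * (1 - Real.tanh (√(1 - 3 * κ ^ 2) * y / √2) ^ 2) / √2 : ℝ) : ℂ)
        + I * κ * (((√2 * κ : ℝ) : ℂ) +
          I * (√(1 - 3 * κ ^ 2) : ℂ) * (Real.tanh (√(1 - 3 * κ ^ 2) * y / √2) : ℂ)))
        * exp (I * κ * y) :=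
  (hasDerivAt_defectA κ y).deriv

theorem defectA_zero (y : ℝ) : defectA 0 y = I * (Real.tanh (y / √2) : ℂ) := by
  simp [defectA]

theorem defectB_zero (y : ℝ) :
    defectB 0 y = I * (((1 - Real.tanh (y / √2) ^ 2) / √2 : ℝ) : ℂ) := by
  simp [defectB_eq]

theorem conj_mul_self_of_norm_eq_one {z : ℂ} (hz : ‖z‖ = 1) : conj z * z = 1 := by
  rw [conj_mul', hz]
  simp

theorem im_conj_defectA_mul_defectB {κ : ℝ} (hκ : κ ^ 2 ≤ 1 / 3) (y : ℝ) :
    (conj (defectA κ y) * defectB κ y).im = κ * (1 - κ ^ 2) := by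
  have hα : √(1 - 3 * κ ^ 2) ^ 2 = 1 - 3 * κ ^ 2 := Real.sq_sqrt (by linarith)
  have hs : √2 ^ 2 = 2 := Real.sq_sqrt (by norm_num)
  have hE : conj (exp (I * κ * y)) * exp (I * κ * y) = 1 := by
    apply conj_mul_self_of_norm_eq_one
    rw [mul_assoc, ← ofReal_mul, norm_exp_I_mul_ofReal]
  rw [defectA, defectB_eq, map_mul, mul_mul_mul_comm, hE, mul_one]
  simp only [map_add, map_mul, conj_ofReal, conj_I, add_im, add_re, mul_im, mul_re,
    ofReal_re, ofReal_im, I_re, I_im, neg_re, neg_im]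
  generalize √(1 - 3 * κ ^ 2) = α at hα ⊢
  field_simp
  linear_combination (√2 * κ) * hα + (√2 * κ ^ 3) * hs

theorem conj_mul_eq_of_mul_eq_mul {u v a b : ℂ} {r s : ℝ} (hu : ‖u‖ = 1) (hv : ‖v‖ = 1)
    (ha : u * r = v * a) (hb : u * s = v * b) : conj a * b = r * s := by
  have h := congrArg₂ (fun z w => conj z * w) ha hb
  simp only [map_mul, conj_ofReal] at h
  linear_combination -h + (r * s : ℂ) * conj_mul_self_of_norm_eq_one hu
    - (conj a * b) * conj_mul_self_of_norm_eq_one hv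

theorem exp_I_mul_eq_exp_I_mul_mul_I_iff (φ ψ : ℝ) :
    exp (I * φ) = exp (I * ψ) * I ↔ ∃ n : ℤ, ψ - φ + Real.pi / 2 = 2 * Real.pi * n := by
  have hI : exp (I * ψ) * I = exp (I * ↑(ψ + Real.pi / 2)) := by
    rw [ofReal_add, mul_add, exp_add, mul_comm I (↑(Real.pi / 2) : ℂ), exp_mul_I]
    simp
  rw [hI, eq_comm, exp_eq_exp_iff_exists_int]
  refine exists_congr fun n => ?_
  have hcancel : I * ↑(ψ + Real.pi / 2) = I * φ + n * (2 * Real.pi * I)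
      ↔ ψ + Real.pi / 2 = φ + 2 * Real.pi * n := by
    rw [show I * φ + n * (2 * Real.pi * I) = I * ↑(φ + 2 * Real.pi * n) by push_cast; ring,
      mul_right_inj' I_ne_zero, ofReal_inj]
  rw [hcancel]
  constructor <;> intro h <;> linarith

theorem mul_ofReal_eq_mul_I_mul_ofReal_iff {u v : ℂ} {r s t c : ℝ} (hu : ‖u‖ = 1)
    (hv : ‖v‖ = 1) (hs : 0 < s) (hc : 0 < c) :
    (u * r = v * (I * t) ∧ u * s = v * (I * c)) ↔ (u = v * I ∧ r = t ∧ s = c) := by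
  constructor
  · rintro ⟨hr, hsc⟩
    have hsc' : s = c := by
      simpa [hu, hv, abs_of_pos hs, abs_of_pos hc] using congrArg norm hsc
    subst hsc'
    have huv : u = v * I := mul_right_cancel₀ (ofReal_ne_zero.2 hs.ne') (by rw [hsc]; ring)
    subst huv
    have hvI : v * I ≠ 0 := mul_ne_zero (norm_ne_zero_iff.1 (by simp [hv])) I_ne_zero
    exact ⟨rfl, ofReal_injective (mul_left_cancel₀ hvI (by rw [hr]; ring)), rfl⟩
  · rintro ⟨rfl, rfl, rfl⟩
    constructor <;> ring

theorem sqrt_sq_add_pow_four_div_two_eq_iff {r : ℝ} (hr : 0 < r) :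
    √(r ^ 2 + r ^ 4 / 2) = (1 - r ^ 2) / √2 ↔ r = 1 / 2 := by
  have hs : √2 ^ 2 = 2 := Real.sq_sqrt (by norm_num)
  constructor
  · intro h
    have hsq := Real.sq_sqrt (show 0 ≤ r ^ 2 + r ^ 4 / 2 by positivity)
    rw [h, div_pow, hs] at hsq
    nlinarith
  · rintro rfl
    rw [Real.sqrt_eq_iff_eq_sq (by positivity) (by positivity), div_pow _ √2, hs]
    norm_num

theorem eq_zero_of_exp_mul_eq_exp_mul_defect {r s φ ψ y κ : ℝ} (hκ : κ ^ 2 < 1 / 3)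
    (ha : exp (I * φ) * r = exp (I * ψ) * defectA κ y)
    (hb : exp (I * φ) * s = exp (I * ψ) * defectB κ y) : κ = 0 := by
  have him := im_conj_defectA_mul_defectB hκ.le y
  rw [conj_mul_eq_of_mul_eq_mul (norm_exp_I_mul_ofReal φ) (norm_exp_I_mul_ofReal ψ) ha hb,
    ← ofReal_mul, ofReal_im] at him
  have h : 1 - κ ^ 2 ≠ 0 := by nlinarith
  simpa [h] using him.symm

theorem exp_mul_eq_exp_mul_defect_zero_iff {r φ ψ y : ℝ} (hr : 0 < r) :
    (exp (I * φ) * r = exp (I * ψ) * defectA 0 y ∧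
        exp (I * φ) * (√(r ^ 2 + r ^ 4 / 2) : ℂ) = exp (I * ψ) * defectB 0 y)
      ↔ (r = 1 / 2 ∧ y = √2 * rArtanh (1 / 2) ∧
          ∃ n : ℤ, ψ - φ + Real.pi / 2 = 2 * Real.pi * n) := by
  have hc : 0 < (1 - Real.tanh (y / √2) ^ 2) / √2 :=
    div_pos (by linarith [Real.tanh_sq_lt_one (y / √2)]) (by positivity)
  rw [defectA_zero, defectB_zero, mul_ofReal_eq_mul_I_mul_ofReal_iff (norm_exp_I_mul_ofReal φ)
    (norm_exp_I_mul_ofReal ψ) (by positivity) hc, exp_I_mul_eq_exp_I_mul_mul_I_iff,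
    ← tanh_div_sqrt_two_eq_half_iff]
  constructor
  · rintro ⟨hphase, rfl, hs⟩
    have hT := (sqrt_sq_add_pow_four_div_two_eq_iff hr).1 hs
    exact ⟨hT, hT, hphase⟩
  · rintro ⟨rfl, hT, hphase⟩
    refine ⟨hphase, hT.symm, ?_⟩
    rw [hT]
    exact (sqrt_sq_add_pow_four_div_two_eq_iff hr).2 rfl

theorem exp_mul_eq_exp_mul_defect_iff {r φ ψ y κ : ℝ} (hr : 0 < r) (hκ : κ ^ 2 < 1 / 3) :
    (exp (I * φ) * r = exp (I * ψ) * defectA κ y ∧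
        exp (I * φ) * (√(r ^ 2 + r ^ 4 / 2) : ℂ) = exp (I * ψ) * defectB κ y)
      ↔ (κ = 0 ∧ r = 1 / 2 ∧ y = √2 * rArtanh (1 / 2) ∧
          ∃ n : ℤ, ψ - φ + Real.pi / 2 = 2 * Real.pi * n) := by
  constructor
  · intro h
    obtain rfl := eq_zero_of_exp_mul_eq_exp_mul_defect hκ h.1 h.2
    exact ⟨rfl, (exp_mul_eq_exp_mul_defect_zero_iff hr).1 h⟩
  · rintro ⟨rfl, h⟩
    exact (exp_mul_eq_exp_mul_defect_zero_iff hr).2 h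

theorem unstable_inter_defect_eq_circle :
    {p : ℂ × ℂ | ∃ r : ℝ, 0 < r ∧ ∃ φ : ℝ,
          p = (exp (I * φ) * (r : ℂ), exp (I * φ) * (√(r ^ 2 + r ^ 4 / 2) : ℂ))}
        ∩ {p : ℂ × ℂ | ∃ y κ ψ : ℝ, κ ^ 2 < 1 / 3 ∧
          p = (exp (I * ψ) * defectA κ y, exp (I * ψ) * defectB κ y)}
      = {p : ℂ × ℂ | ∃ φ : ℝ, p = (exp (I * φ) / 2, exp (I * φ) * 3 / (4 * (√2 : ℂ)))} := by
  have hs : √((1 / 2) ^ 2 + (1 / 2) ^ 4 / 2) = (1 - (1 / 2) ^ 2) / √2 :=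
    (sqrt_sq_add_pow_four_div_two_eq_iff (by norm_num)).2 rfl
  have hcircle (φ : ℝ) : (exp (I * φ) * ((1 / 2 : ℝ) : ℂ),
      exp (I * φ) * (√((1 / 2) ^ 2 + (1 / 2) ^ 4 / 2) : ℂ))
      = (exp (I * φ) / 2, exp (I * φ) * 3 / (4 * (√2 : ℂ))) := by
    rw [hs]
    push_cast
    ext <;> ring
  ext p
  simp only [mem_inter_iff, mem_ofPred_eq]
  constructor
  · rintro ⟨⟨r, hr, φ, rfl⟩, y, κ, ψ, hκ, hp⟩
    obtain ⟨-, rfl, -⟩ := (exp_mul_eq_exp_mul_defect_iff hr hκ).1 (Prod.mk.inj hp)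
    exact ⟨φ, hcircle φ⟩
  · rintro ⟨φ, rfl⟩
    obtain ⟨ha, hb⟩ := (exp_mul_eq_exp_mul_defect_iff (ψ := φ - Real.pi / 2) (by norm_num)
      (by norm_num)).2 ⟨rfl, rfl, rfl, 0, by ring⟩
    refine ⟨⟨1 / 2, by norm_num, φ, (hcircle φ).symm⟩, √2 * rArtanh (1 / 2), 0, φ - Real.pi / 2,
      by norm_num, ?_⟩
    rw [← hcircle, ha, hb]

/-- **The intersection of the unstable manifold of the origin with the strong
stable foliation of the periodic orbits (ε = 0).**
The equations e^{iφ}r = e^{iψ}a_d(y;κ), e^{iφ}√(r²+r⁴/2) = e^{iψ}b_d(y;κ) hold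
iff κ = 0, r = 1/2, y = √2·artanh(1/2) and ψ − φ + π/2 ∈ 2πℤ; consequently the
two manifolds intersect exactly in the circle {(e^{iφ}/2, e^{iφ}·3/(4√2))}. -/
theorem epsilon_zero_intersection
    (r φ ψ y κ : ℝ) (hr : 0 < r) (hκ : κ ^ 2 < 1 / 3) :
    ((Complex.exp (Complex.I * φ) * (r : ℂ) = Complex.exp (Complex.I * ψ) * defectA κ y ∧
        Complex.exp (Complex.I * φ) * (Real.sqrt (r ^ 2 + r ^ 4 / 2) : ℂ)
          = Complex.exp (Complex.I * ψ) * defectB κ y)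
      ↔ (κ = 0 ∧ r = 1 / 2 ∧ y = Real.sqrt 2 * rArtanh (1 / 2) ∧
          ∃ n : ℤ, ψ - φ + Real.pi / 2 = 2 * Real.pi * n))
    ∧
    ({p : ℂ × ℂ | ∃ r' : ℝ, 0 < r' ∧ ∃ φ' : ℝ,
          p = (Complex.exp (Complex.I * φ') * (r' : ℂ),
               Complex.exp (Complex.I * φ') * (Real.sqrt (r' ^ 2 + r' ^ 4 / 2) : ℂ))}
        ∩ {p : ℂ × ℂ | ∃ y' κ' ψ' : ℝ, κ' ^ 2 < 1 / 3 ∧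
          p = (Complex.exp (Complex.I * ψ') * defectA κ' y',
               Complex.exp (Complex.I * ψ') * defectB κ' y')}
      = {p : ℂ × ℂ | ∃ φ' : ℝ,
          p = (Complex.exp (Complex.I * φ') / 2,
               Complex.exp (Complex.I * φ') * 3 / (4 * (Real.sqrt 2 : ℂ)))}) :=
  ⟨exp_mul_eq_exp_mul_defect_iff hr hκ, unstable_inter_defect_eq_circle⟩
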